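/- Fix N ∈ ℕ, α > 0, r > 0, and T > 0. Suppose u ∈ C¹([0,T]; E_N) satisfies, for all t ∈ [0,T], the Galerkin fractional Euler–Voigt system (I + α^{2r} A^r) u'(t) = − P_N P_σ((u(t)·∇)u(t)). Then the quantity ‖u(t)‖_{L²}² + α^{2r} ‖A^{r/2} u(t)‖_{L²}² is constant in t; that is, for all t ∈ [0,T], ‖u(t)‖_{L²}² + α^{2r} ‖A^{r/2} u(t)‖_{L²}² = ‖u(0)‖_{L²}² + α^{2r} ‖A^{r/2} u(0)‖_{L²}². -/

import Mathlib

/-!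
Pairing the equation with `ū` turns the left side into the time derivative of
`½ (‖u‖² + α^{2r} ‖A^{r/2}u‖²)` and the right side into `-b(u, u, u)`; the projection
`P_N P_σ` is invisible because `u` is itself divergence-free and carried by the Galerkin modes.
In Fourier variables `b(u, u, u)` is a sum over triads `(m, n, m + n)`, and incompressibility
(`m · ĉ_m = 0`) together with reality (`ĉ_{-k} = conj ĉ_k`) make each term change sign under
`n ↦ -(m + n)`, so the sum cancels.
-/

noncomputable section

/-- Fourier coefficient families for trigonometric polynomials on `T³ = ℝ³/ℤ³`:
`c k ∈ ℂ³` is the coefficient of `e^{2πi k·x}`. -/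
abbrev Coeffs := (Fin 3 → ℤ) → Fin 3 → ℂ

/-- `|k|² = ∑ i, kᵢ²`. -/
def ksq (k : Fin 3 → ℤ) : ℤ := ∑ i, (k i) ^ 2

/-- The eigenvalue `|2πk|²` of `A` at wavenumber `k`. -/
def mu (k : Fin 3 → ℤ) : ℝ := (2 * Real.pi) ^ 2 * (ksq k : ℝ)

/-- Membership in the Galerkin space `E_N`: real-valued (conjugate symmetric),
divergence-free (`k·ĉ_k = 0`), mean-free and supported on `0 < |k| ≤ N`. -/
def memEN (N : ℕ) (c : Coeffs) : Prop :=
  (∀ k j, c (-k) j = starRingEnd ℂ (c k j)) ∧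
  (∀ k, ∑ i, (k i : ℂ) * c k i = 0) ∧
  (∀ k, (k = 0 ∨ ((N : ℤ) ^ 2 < ksq k)) → c k = 0)

/-- The lattice box `{k : |kᵢ| ≤ N for each i}`, containing all active modes. -/
def box (N : ℕ) : Finset (Fin 3 → ℤ) :=
  Finset.Icc (fun _ => -(N : ℤ)) (fun _ => (N : ℤ))

/-- The `k`-th Fourier coefficient of the nonlinearity `(u·∇)u` for `u ∈ E_N` with
coefficients `c`:  `∑_{m+n=k} (2πi ∑ᵢ (c m)ᵢ nᵢ) (c n)ⱼ`. -/
def nonlinCoeff (N : ℕ) (c : Coeffs) (k : Fin 3 → ℤ) : Fin 3 → ℂ :=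
  fun j => ∑ n ∈ box N, (2 * Real.pi * Complex.I * ∑ i, c (k - n) i * (n i : ℂ)) * c n j

/-- Orthogonal projection of `v ∈ ℂ³` onto the plane orthogonal to `k`. -/
def projPerp (k : Fin 3 → ℤ) (v : Fin 3 → ℂ) : Fin 3 → ℂ :=
  fun j => v j - ((∑ i, (k i : ℂ) * v i) / (ksq k : ℂ)) * (k j : ℂ)

/-- The coefficients of `P_N P_σ((u·∇)u)` for `u ∈ E_N` with coefficients `c`. -/
def BN (N : ℕ) (c : Coeffs) (k : Fin 3 → ℤ) : Fin 3 → ℂ :=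
  if k ≠ 0 ∧ ksq k ≤ (N : ℤ) ^ 2 then projPerp k (nonlinCoeff N c k) else 0

/-- `‖u‖_{L²}² = ∑_{0<|k|≤N} |ĉ_k|²` (Parseval). -/
def l2sq (N : ℕ) (c : Coeffs) : ℝ :=
  ∑ k ∈ box N, ∑ j, Complex.normSq (c k j)

/-- `‖A^{r/2}u‖_{L²}² = ∑_{0<|k|≤N} |2πk|^{2r} |ĉ_k|²`. -/
def arsq (N : ℕ) (r : ℝ) (c : Coeffs) : ℝ :=
  ∑ k ∈ box N, mu k ^ r * ∑ j, Complex.normSq (c k j)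

end

open Finset hiding box
open scoped ComplexConjugate

lemma mem_box_iff {N : ℕ} {k : Fin 3 → ℤ} :
    k ∈ box N ↔ ∀ i, -(N : ℤ) ≤ k i ∧ k i ≤ N := by
  simp [box, Pi.le_def, forall_and]

lemma neg_mem_box {N : ℕ} {k : Fin 3 → ℤ} (hk : k ∈ box N) : -k ∈ box N := by
  rw [mem_box_iff] at hk ⊢
  intro i
  have := hk i
  simp only [Pi.neg_apply]
  omega

lemma memEN.eq_zero_of_notMem_box {N : ℕ} {c : Coeffs} (hc : memEN N c) {k : Fin 3 → ℤ}
    (hk : k ∉ box N) : c k = 0 := by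
  refine hc.2.2 k (Or.inr ?_)
  obtain ⟨i, hi⟩ : ∃ i, ¬(-(N : ℤ) ≤ k i ∧ k i ≤ N) := by
    simpa [mem_box_iff] using hk
  have hNi : (N : ℤ) ^ 2 < k i ^ 2 := by rcases not_and_or.mp hi with h | h <;> nlinarith
  have hik : k i ^ 2 ≤ ksq k :=
    single_le_sum (f := fun j => k j ^ 2) (fun j _ => sq_nonneg (k j)) (mem_univ i)
  exact hNi.trans_le hik

lemma sum_conj_mul_projPerp {k : Fin 3 → ℤ} {w : Fin 3 → ℂ}
    (hw : ∑ i, (k i : ℂ) * w i = 0) (v : Fin 3 → ℂ) :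
    ∑ j, conj (w j) * projPerp k v j = ∑ j, conj (w j) * v j := by
  have hw' : ∑ j, conj (w j) * (k j : ℂ) = 0 := by
    simpa [mul_comm] using congrArg conj hw
  simp only [projPerp, mul_sub, sum_sub_distrib, sub_eq_self]
  simp only [mul_left_comm _ (_ / _), ← mul_sum, hw', mul_zero]

lemma memEN.sum_conj_mul_BN {N : ℕ} {c : Coeffs} (hc : memEN N c) (k : Fin 3 → ℤ) :
    ∑ j, conj (c k j) * BN N c k j = ∑ j, conj (c k j) * nonlinCoeff N c k j := by
  by_cases hk : k ≠ 0 ∧ ksq k ≤ (N : ℤ) ^ 2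
  · rw [BN, if_pos hk, sum_conj_mul_projPerp (hc.2.1 k)]
  · have hck : c k = 0 := hc.2.2 k (by push Not at hk; tauto)
    simp [hck]

/-- `triad c m n` is the contribution of the interacting modes `(m, n, m + n)` to
`∫ ((u·∇)u)·ū`. -/
noncomputable def triad (c : Coeffs) (m n : Fin 3 → ℤ) : ℂ :=
  (2 * Real.pi * Complex.I * ∑ i, c m i * (n i : ℂ)) * ∑ j, conj (c (m + n) j) * c n j

lemma sum_conj_mul_nonlinCoeff (N : ℕ) (c : Coeffs) (k : Fin 3 → ℤ) :
    ∑ j, conj (c k j) * nonlinCoeff N c k j = ∑ n ∈ box N, triad c (k - n) n := by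
  simp only [nonlinCoeff, triad, sub_add_cancel, mul_sum]
  rw [sum_comm]
  exact sum_congr rfl fun n _ => sum_congr rfl fun j _ => by ring

lemma memEN.mem_box_of_triad_ne_zero {N : ℕ} {c : Coeffs} (hc : memEN N c)
    {m n : Fin 3 → ℤ} (h : triad c m n ≠ 0) :
    m ∈ box N ∧ n ∈ box N ∧ m + n ∈ box N := by
  refine ⟨?_, ?_, ?_⟩ <;> by_contra hk <;> simp [triad, hc.eq_zero_of_notMem_box hk] at h

lemma memEN.triad_neg_sub {N : ℕ} {c : Coeffs} (hc : memEN N c) (m n : Fin 3 → ℤ) :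
    triad c m (-m - n) = -triad c m n := by
  have hdiv : ∑ i, c m i * (m i : ℂ) = 0 := by simpa [mul_comm] using hc.2.1 m
  have hadv : ∑ i, c m i * ((-m - n) i : ℂ) = -∑ i, c m i * (n i : ℂ) := by
    simp only [Pi.sub_apply, Pi.neg_apply, Int.cast_sub, Int.cast_neg, mul_sub, mul_neg,
      sum_sub_distrib, sum_neg_distrib, hdiv, neg_zero, zero_sub]
  have hpair : ∑ j, conj (c (m + (-m - n)) j) * c (-m - n) j
      = ∑ j, conj (c (m + n) j) * c n j := by
    rw [show m + (-m - n) = -n by abel, show -m - n = -(m + n) by abel]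
    exact sum_congr rfl fun j _ => by rw [hc.1, hc.1, Complex.conj_conj, mul_comm]
  rw [triad, triad, hadv, hpair]
  ring

lemma memEN.sum_triad_eq_zero {N : ℕ} {c : Coeffs} (hc : memEN N c) (m : Fin 3 → ℤ) :
    ∑ n ∈ box N, triad c m n = 0 := by
  classical
  rw [← sum_filter_of_ne (p := fun n => m + n ∈ box N)
    fun n _ h => (hc.mem_box_of_triad_ne_zero h).2.2]
  refine sum_involution (fun n _ => -m - n) (fun n _ => by rw [hc.triad_neg_sub]; ring)
    (fun n _ h hfix => h ?_) (fun n hn => ?_) (fun n _ => by abel)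
  · have hanti := hc.triad_neg_sub m n
    rw [hfix] at hanti
    exact CharZero.eq_neg_self_iff.mp hanti
  · obtain ⟨hn, hmn⟩ := mem_filter.mp hn
    refine mem_filter.mpr ⟨?_, ?_⟩
    · simpa [neg_add', sub_eq_add_neg, add_comm] using neg_mem_box hmn
    · rw [show m + (-m - n) = -n by abel]
      exact neg_mem_box hn

lemma memEN.sum_triad_sub {N : ℕ} {c : Coeffs} (hc : memEN N c) (n : Fin 3 → ℤ) :
    ∑ k ∈ box N, triad c (k - n) n = ∑ m ∈ box N, triad c m n :=
  sum_bij_ne_zero (fun k _ _ => k - n)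
    (fun _ _ h => (hc.mem_box_of_triad_ne_zero h).1)
    (fun _ _ _ _ _ _ h => sub_left_inj.mp h)
    (fun m _ h => ⟨m + n, by simpa using (hc.mem_box_of_triad_ne_zero h).2.2,
      by simpa using h, add_sub_cancel_right m n⟩)
    (fun _ _ _ => rfl)

theorem memEN.sum_conj_mul_BN_eq_zero {N : ℕ} {c : Coeffs} (hc : memEN N c) :
    ∑ k ∈ box N, ∑ j, conj (c k j) * BN N c k j = 0 := by
  calc ∑ k ∈ box N, ∑ j, conj (c k j) * BN N c k j
      = ∑ k ∈ box N, ∑ n ∈ box N, triad c (k - n) n := by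
        simp only [hc.sum_conj_mul_BN, sum_conj_mul_nonlinCoeff]
    _ = ∑ n ∈ box N, ∑ m ∈ box N, triad c m n := by
        rw [sum_comm]; simp only [hc.sum_triad_sub]
    _ = 0 := by rw [sum_comm]; exact sum_eq_zero fun m _ => hc.sum_triad_eq_zero m

lemma HasDerivWithinAt.normSq {f : ℝ → ℂ} {f' : ℂ} {s : Set ℝ} {t : ℝ}
    (hf : HasDerivWithinAt f f' s t) :
    HasDerivWithinAt (fun x => Complex.normSq (f x)) (2 * (conj (f t) * f').re) s t := by
  simpa [Complex.normSq_eq_norm_sq, Complex.inner, mul_comm] using hf.norm_sq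

lemma hasDerivWithinAt_sum_mul_normSq {ι : Type*} (K : Finset ι) (w : ι → ℝ)
    {c : ℝ → ι → Fin 3 → ℂ} {d : ι → Fin 3 → ℂ} {s : Set ℝ} {t : ℝ}
    (hc : ∀ k j, HasDerivWithinAt (fun x => c x k j) (d k j) s t) :
    HasDerivWithinAt (fun x => ∑ k ∈ K, w k * ∑ j, Complex.normSq (c x k j))
      (∑ k ∈ K, w k * ∑ j, 2 * (conj (c t k j) * d k j).re) s t :=
  HasDerivWithinAt.fun_sum fun k _ =>
    (HasDerivWithinAt.fun_sum fun j _ => (hc k j).normSq).const_mul (w k)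

lemma l2sq_add_mul_arsq (N : ℕ) (β r : ℝ) (c : Coeffs) :
    l2sq N c + β * arsq N r c =
      ∑ k ∈ box N, (1 + β * mu k ^ r) * ∑ j, Complex.normSq (c k j) := by
  rw [l2sq, arsq, mul_sum, ← sum_add_distrib]
  exact sum_congr rfl fun k _ => by ring

theorem memEN.sum_mul_re_conj_mul_eq_zero {N : ℕ} {c d : Coeffs} (hc : memEN N c)
    (w : (Fin 3 → ℤ) → ℝ) (hd : ∀ k j, (w k : ℂ) * d k j = -BN N c k j) :
    ∑ k ∈ box N, w k * ∑ j, 2 * (conj (c k j) * d k j).re = 0 := by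
  have hterm : ∀ k, w k * ∑ j, 2 * (conj (c k j) * d k j).re
      = -2 * (∑ j, conj (c k j) * BN N c k j).re := by
    intro k
    rw [mul_sum, Complex.re_sum, mul_sum]
    refine sum_congr rfl fun j _ => ?_
    calc w k * (2 * (conj (c k j) * d k j).re)
        = 2 * (conj (c k j) * ((w k : ℂ) * d k j)).re := by
          rw [mul_left_comm _ (w k : ℂ), Complex.re_ofReal_mul]; ring
      _ = -2 * (conj (c k j) * BN N c k j).re := by rw [hd, mul_neg, Complex.neg_re]; ring
  rw [sum_congr rfl fun k _ => hterm k, ← mul_sum, ← Complex.re_sum, hc.sum_conj_mul_BN_eq_zero,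
    Complex.zero_re, mul_zero]

lemma Convex.eq_of_hasDerivWithinAt_zero {E : Type*} [NormedAddCommGroup E] [NormedSpace ℝ E]
    {f : ℝ → E} {s : Set ℝ} (hs : Convex ℝ s) (hf : ∀ x ∈ s, HasDerivWithinAt f 0 s x)
    {x y : ℝ} (hx : x ∈ s) (hy : y ∈ s) : f y = f x := by
  simpa [sub_eq_zero] using hs.norm_image_sub_le_of_norm_hasDerivWithin_le hf
    (fun _ _ => norm_zero.le) hx hy

theorem galerkin_fEV_energy_conservation_general
    (N : ℕ) (α r T : ℝ)
    (c d : ℝ → Coeffs)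
    (hmem : ∀ t ∈ Set.Icc (0 : ℝ) T, memEN N (c t))
    (hderiv : ∀ t ∈ Set.Icc (0 : ℝ) T, ∀ k j,
      HasDerivWithinAt (fun s => c s k j) (d t k j) (Set.Icc (0 : ℝ) T) t)
    (heq : ∀ t ∈ Set.Icc (0 : ℝ) T, ∀ k j,
      ((1 + α ^ (2 * r) * mu k ^ r : ℝ) : ℂ) * d t k j = - BN N (c t) k j) :
    ∀ t ∈ Set.Icc (0 : ℝ) T,
      l2sq N (c t) + α ^ (2 * r) * arsq N r (c t)
        = l2sq N (c 0) + α ^ (2 * r) * arsq N r (c 0) := by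
  intro t ht
  have hconst : ∀ s ∈ Set.Icc (0 : ℝ) T, HasDerivWithinAt
      (fun s => l2sq N (c s) + α ^ (2 * r) * arsq N r (c s)) 0 (Set.Icc 0 T) s := by
    intro s hs
    simp only [l2sq_add_mul_arsq]
    exact (hasDerivWithinAt_sum_mul_normSq _ _ (hderiv s hs)).congr_deriv
      ((hmem s hs).sum_mul_re_conj_mul_eq_zero _ (heq s hs))
  exact (convex_Icc 0 T).eq_of_hasDerivWithinAt_zero hconst ⟨le_rfl, ht.1.trans ht.2⟩ ht

/-- Energy conservation for the Galerkin fractional Euler–Voigt system: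
if `u ∈ C¹([0,T]; E_N)` (represented by its coefficient family `c`, with derivative `d`)
solves `(I + α^{2r}A^r) u' = -P_N P_σ((u·∇)u)`, then
`‖u(t)‖_{L²}² + α^{2r}‖A^{r/2}u(t)‖_{L²}²` is constant on `[0,T]`. -/
theorem galerkin_fEV_energy_conservation
    (N : ℕ) (α r T : ℝ) (hα : 0 < α) (hr : 0 < r) (hT : 0 < T)
    (c d : ℝ → Coeffs)
    (hmem : ∀ t ∈ Set.Icc (0 : ℝ) T, memEN N (c t))
    (hderiv : ∀ t ∈ Set.Icc (0 : ℝ) T, ∀ k j,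
      HasDerivWithinAt (fun s => c s k j) (d t k j) (Set.Icc (0 : ℝ) T) t)
    (hC1 : ∀ k j, ContinuousOn (fun s => d s k j) (Set.Icc (0 : ℝ) T))
    (heq : ∀ t ∈ Set.Icc (0 : ℝ) T, ∀ k j,
      ((1 + α ^ (2 * r) * mu k ^ r : ℝ) : ℂ) * d t k j = - BN N (c t) k j) :
    ∀ t ∈ Set.Icc (0 : ℝ) T,
      l2sq N (c t) + α ^ (2 * r) * arsq N r (c t)
        = l2sq N (c 0) + α ^ (2 * r) * arsq N r (c 0) :=
  galerkin_fEV_energy_conservation_general N α r T c d hmem hderiv heq
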